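/- arXiv:1404.2710 — 7 statements merged into one kernel-verified Lean document; each statement's English description precedes it below -/
import Mathlib

section
/- For all natural numbers n ≥ 1 and all m with 1 ≤ m ≤ n, the rational number binom(n-1, m-1) · gcd(m,n) / m is a positive integer. -/
/-! From `(n + 1) * choose n k = choose (n + 1) (k + 1) * (k + 1)`, the number `k + 1` divides both
`choose n k * (k + 1)` and `choose n k * (n + 1)`, hence their gcd `choose n k * gcd (k + 1) (n + 1)`. -/

theorem Nat.add_one_dvd_choose_mul_gcd (n k : ℕ) :
    k + 1 ∣ n.choose k * (k + 1).gcd (n + 1) := by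
  rw [← Nat.gcd_mul_left]
  refine Nat.dvd_gcd (Dvd.intro_left _ rfl) ⟨(n + 1).choose (k + 1), ?_⟩
  rw [Nat.mul_comm, Nat.add_one_mul_choose_eq, Nat.mul_comm]

theorem stmt_0_general (n m : ℕ) (hm : 1 ≤ m) (hmn : m ≤ n) :
    ∃ k : ℕ, 0 < k ∧
      ((Nat.choose (n - 1) (m - 1) * Nat.gcd m n : ℚ) / (m : ℚ)) = (k : ℚ) := by
  obtain ⟨b, rfl⟩ := Nat.exists_eq_add_of_le' hm
  obtain ⟨a, rfl⟩ := Nat.exists_eq_add_of_le' (hm.trans hmn)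
  have hdvd := Nat.add_one_dvd_choose_mul_gcd a b
  have hpos : 0 < a.choose b * (b + 1).gcd (a + 1) :=
    Nat.mul_pos (Nat.choose_pos (by omega)) (Nat.gcd_pos_of_pos_left _ b.succ_pos)
  refine ⟨a.choose b * (b + 1).gcd (a + 1) / (b + 1),
    Nat.div_pos (Nat.le_of_dvd hpos hdvd) b.succ_pos, ?_⟩
  rw [Nat.cast_div hdvd (by positivity)]
  simp

theorem stmt_0 (n m : ℕ) (hn : 1 ≤ n) (hm : 1 ≤ m) (hmn : m ≤ n) :
    ∃ k : ℕ, 0 < k ∧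
      ((Nat.choose (n - 1) (m - 1) * Nat.gcd m n : ℚ) / (m : ℚ)) = (k : ℚ) :=
  stmt_0_general n m hm hmn
end

section
/- Let n, m ≥ 1 with m ≤ n. Then lcm(n,m) divides m · binom(n,m). -/
theorem stmt_2 (n m : ℕ) (hn : 1 ≤ n) (hm : 1 ≤ m) (hmn : m ≤ n) :
    Nat.lcm n m ∣ m * Nat.choose n m := by
  apply Nat.lcm_dvd
  · have h := Nat.add_one_mul_choose_eq (n - 1) (m - 1)
    simp only [Nat.succ_eq_add_one, Nat.sub_add_cancel hn, Nat.sub_add_cancel hm] at h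
    exact ⟨Nat.choose (n-1) (m-1), by rw [mul_comm m, ← h, mul_comm]⟩
  · exact Dvd.intro _ rfl
end

section
/- For every m ≥ 1 and all n ≥ 0, 1 + 2^n · y₀(m,n) ≡ 0 (mod 3^m), where y₀(m,n) := ((3^m+1)/2)^(n + 3^(m-1)) mod 3^m; in other words, 3^m divides 1 + 2^n · y₀(m,n). -/
lemma aux_int (m : ℕ) (hm : 1 ≤ m) : (3:ℤ)^m ∣ 2 ^ (3 ^ (m - 1)) + 1 := by
  induction m with
  | zero => omega
  | succ m ih =>
    rcases Nat.eq_or_lt_of_le hm with h | h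
    · simp [← h]
    · have hm' : 1 ≤ m := by omega
      have ih' := ih hm'
      set a : ℤ := 2 ^ (3 ^ (m - 1)) with ha
      have h3 : (3:ℤ) ∣ a + 1 := dvd_trans (dvd_pow_self 3 (by omega)) ih'
      have hk : (3:ℤ) ∣ a^2 - a + 1 := by
        obtain ⟨k, hk⟩ := h3
        have : a = 3*k - 1 := by linarith
        rw [this]; ring_nf; exact ⟨3*k^2 - 3*k + 1, by ring⟩
      have hpow : (2:ℤ) ^ (3 ^ (m + 1 - 1)) + 1 = (a + 1) * (a^2 - a + 1) := by
        have : 3 ^ (m + 1 - 1) = 3 ^ (m - 1) * 3 := by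
          rw [Nat.add_sub_cancel, ← pow_succ]
          congr 1; omega
        rw [this, pow_mul, ha]; ring
      rw [hpow, pow_succ]
      exact mul_dvd_mul ih' hk

theorem stmt_4 (m n : ℕ) (hm : 1 ≤ m) :
    3 ^ m ∣ 1 + 2 ^ n * (((3 ^ m + 1) / 2) ^ (n + 3 ^ (m - 1)) % 3 ^ m) := by
  set q : ℕ := (3 ^ m + 1) / 2 with hq
  have h2q : 2 * q = 3 ^ m + 1 := by
    have hodd : 3 ^ m % 2 = 1 := by
      rw [Nat.pow_mod]; simp
    omega
  have key : ((1 + 2 ^ n * (q ^ (n + 3 ^ (m-1)) % 3 ^ m) : ℕ) : ZMod (3^m)) = 0 := by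
    push_cast [ZMod.natCast_mod]
    have h1 : (2 * q : ZMod (3^m)) = 1 := by
      have := congrArg (Nat.cast : ℕ → ZMod (3^m)) h2q
      push_cast at this
      have h0 : ((3:ZMod (3^m)))^m = 0 := by
        have h := ZMod.natCast_self (3^m); push_cast at h; exact h
      rw [this, h0]; ring
    have h2 : ((2:ZMod (3^m)))^(3^(m-1)) = -1 := by
      have := aux_int m hm
      have : ((2 ^ (3 ^ (m - 1)) + 1 : ℤ) : ZMod (3^m)) = 0 := by
        rw [ZMod.intCast_zmod_eq_zero_iff_dvd]
        exact_mod_cast this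
      push_cast at this
      linear_combination this
    have h3 : ((q:ZMod (3^m)))^(3^(m-1)) = -1 := by
      have hqp : ((q:ZMod (3^m)))^(3^(m-1)) * (2:ZMod (3^m))^(3^(m-1)) = 1 := by
        rw [← mul_pow, mul_comm, h1, one_pow]
      rw [h2] at hqp
      linear_combination -hqp
    calc (1 : ZMod (3^m)) + 2 ^ n * (q:ZMod (3^m)) ^ (n + 3 ^ (m-1))
        = 1 + (2 * q)^n * (q:ZMod (3^m)) ^ (3 ^ (m-1)) := by rw [pow_add]; ring
      _ = 0 := by rw [h1, h3]; ring
  exact (ZMod.natCast_eq_zero_iff _ _).mp key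
end

section
/- For all m ≥ 1 and n ≥ 0, the pair (x₀, y₀) with y₀ = y₀(m,n) := ((3^m+1)/2)^(n+3^(m-1)) mod 3^m and x₀ = (1 + 2^n · y₀)/3^m is a solution in positive integers of the Diophantine equation 3^m · x − 2^n · y = 1. -/
lemma key_dvd (k : ℕ) : (3:ℤ)^(k+1) ∣ 2^(3^k) + 1 := by
  induction k with
  | zero => norm_num
  | succ k ih =>
    set x : ℤ := 2^(3^k) with hx
    have hpow : (2:ℤ)^(3^(k+1)) = x^3 := by
      rw [hx, ← pow_mul, pow_succ]
    have hfac : x^3 + 1 = (x + 1) * (x^2 - x + 1) := by ring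
    have h3 : (3:ℤ) ∣ x^2 - x + 1 := by
      have h1 : (3:ℤ) ∣ x + 1 := dvd_trans (dvd_pow_self 3 (Nat.succ_ne_zero k)) ih
      have : x^2 - x + 1 = (x+1)^2 - 3*x := by ring
      rw [this]
      exact dvd_sub (dvd_trans h1 (dvd_pow_self _ two_ne_zero)) ⟨x, rfl⟩
    rw [hpow, hfac]
    have : (3:ℤ)^(k+1+1) = 3^(k+1) * 3 := by ring
    rw [this]
    exact mul_dvd_mul ih h3

theorem stmt_5 (m n : ℕ) (hm : 1 ≤ m) :
    let y₀ : ℕ := ((3 ^ m + 1) / 2) ^ (n + 3 ^ (m - 1)) % 3 ^ m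
    let x₀ : ℕ := (1 + 2 ^ n * y₀) / 3 ^ m
    0 < x₀ ∧ 0 < y₀ ∧ (3 ^ m * x₀ : ℤ) - 2 ^ n * y₀ = 1 := by
  intro y₀ x₀
  set N : ℕ := 3 ^ m with hN
  set a : ℕ := (3 ^ m + 1) / 2 with ha
  set e : ℕ := 3 ^ (m - 1) with he
  have hNpos : 0 < N := pow_pos (by norm_num) m
  have hN3 : 3 ≤ N := by
    calc 3 = 3 ^ 1 := (pow_one 3).symm
    _ ≤ 3 ^ m := Nat.pow_le_pow_right (by norm_num) hm
  -- 2 * a = 3^m + 1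
  have h2a : 2 * a = 3 ^ m + 1 := by
    rw [ha]
    refine Nat.mul_div_cancel' ?_
    have : Odd (3 ^ m) := Odd.pow ⟨1, rfl⟩
    obtain ⟨t, ht⟩ := this
    omega
  -- key: N ∣ 2^e + 1
  have hkey : (N : ℤ) ∣ 2 ^ e + 1 := by
    have := key_dvd (m - 1)
    have hm1 : m - 1 + 1 = m := Nat.succ_pred_eq_of_pos hm
    rw [hm1] at this
    simpa [hN, he] using this
  -- work in ZMod N
  have h2e : (2 : ZMod N) ^ e = -1 := by
    have : ((2 ^ e + 1 : ℤ) : ZMod N) = 0 := by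
      rw [ZMod.intCast_zmod_eq_zero_iff_dvd]
      exact_mod_cast hkey
    push_cast at this
    linear_combination this
  have h2a' : (2 : ZMod N) * (a : ZMod N) = 1 := by
    have : ((2 * a : ℕ) : ZMod N) = ((3 ^ m + 1 : ℕ) : ZMod N) := by rw [h2a]
    push_cast at this
    have h30 : ((3:ZMod N)) ^ m = 0 := by
      have h := ZMod.natCast_self N
      rw [hN] at h
      push_cast at h
      exact h
    rw [this, h30, zero_add]
  have hae : (a : ZMod N) ^ e = -1 := by
    have h1 : ((2 : ZMod N) * a) ^ e = 1 := by rw [h2a']; simp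
    rw [mul_pow, h2e] at h1
    linear_combination -h1
  have hy₀ : (y₀ : ZMod N) = (a : ZMod N) ^ (n + e) := by
    show (((a ^ (n + e)) % N : ℕ) : ZMod N) = _
    rw [ZMod.natCast_mod]
    push_cast
    ring
  have hmain : ((2 ^ n * y₀ + 1 : ℕ) : ZMod N) = 0 := by
    push_cast
    rw [hy₀, pow_add, ← mul_assoc, ← mul_pow, h2a', hae]
    ring
  have hdvd : N ∣ 2 ^ n * y₀ + 1 := (ZMod.natCast_eq_zero_iff _ _).mp hmain
  have hdvd' : N ∣ 1 + 2 ^ n * y₀ := by rwa [Nat.add_comm]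
  have hxeq : N * x₀ = 1 + 2 ^ n * y₀ := Nat.mul_div_cancel' hdvd'
  have hx₀pos : 0 < x₀ := Nat.div_pos (Nat.le_of_dvd (by positivity) hdvd') hNpos
  have hy₀pos : 0 < y₀ := by
    rcases Nat.eq_zero_or_pos y₀ with h | h
    · exfalso
      rw [h] at hdvd
      simp at hdvd
      omega
    · exact h
  refine ⟨hx₀pos, hy₀pos, ?_⟩
  have : ((N * x₀ : ℕ) : ℤ) = ((1 + 2 ^ n * y₀ : ℕ) : ℤ) := congrArg Nat.cast hxeq
  push_cast at this
  rw [hN] at this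
  push_cast at this ⊢
  linarith
end

section
/- For every m ≥ 0, the sequence n ↦ y₀(m,n) := ((3^m+1)/2)^(n + 3^(m−1)) mod 3^m is periodic in n with exact (primitive) period φ(3^m), where φ(1) := 1. -/
/-!
Since `(3 ^ m + 1) / 2` is the inverse of `2` modulo `3 ^ m`, the periods of `y₀` are exactly the
multiples of the multiplicative order of `2` modulo `3 ^ m`. For `m ≥ 1` that order is
`φ (3 ^ m) = 2 * 3 ^ (m - 1)`: it is even because `2` has order `2` modulo `3`, and it is
divisible by `3 ^ (m - 1)` because `2 ^ 2 = 1 + 3` has order `3 ^ (m - 1)` modulo `3 ^ m`.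
-/

open scoped Nat

theorem orderOf_eq_orderOf_of_mul_eq_one {M : Type*} [CommMonoid M] {a b : M} (h : a * b = 1) :
    orderOf a = orderOf b := by
  have key (x y : M) (hxy : x * y = 1) (k : ℕ) (hx : x ^ k = 1) : y ^ k = 1 :=
    calc y ^ k = (x * y) ^ k := by rw [mul_pow, hx, one_mul]
      _ = 1 := by rw [hxy, one_pow]
  exact orderOf_eq_orderOf_iff.mpr fun k => ⟨key a b h k, key b a ((mul_comm b a).trans h) k⟩

namespace ZMod

theorem natCast_succ_div_two_mul_two {N : ℕ} (hN : Odd N) :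
    (((N + 1) / 2 : ℕ) : ZMod N) * 2 = 1 := by
  have h : (N + 1) / 2 * 2 = N + 1 := Nat.div_mul_cancel hN.add_one.two_dvd
  rw [← Nat.cast_two (R := ZMod N), ← Nat.cast_mul, h, Nat.cast_succ, natCast_self, zero_add]

theorem orderOf_two_three_pow (m : ℕ) : orderOf (2 : ZMod (3 ^ m)) = φ (3 ^ m) := by
  rcases m with _ | n
  · rw [pow_zero, Subsingleton.elim (2 : ZMod 1) 1, orderOf_one, Nat.totient_one]
  apply Nat.dvd_antisymm
  · have h := Nat.ModEq.pow_totient (x := 2) (n := 3 ^ (n + 1)) (.pow_right _ (by decide))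
    exact orderOf_dvd_of_pow_eq_one (by exact_mod_cast (natCast_eq_natCast_iff _ _ _).mpr h)
  rw [Nat.totient_prime_pow_succ Nat.prime_three, mul_comm, show 3 - 1 = 2 from rfl]
  refine Nat.Coprime.mul_dvd_of_dvd_of_dvd (.pow_right n (by decide : Nat.Coprime 2 3)) ?_ ?_
  · have h := orderOf_map_dvd (castHom (dvd_pow_self 3 n.succ_ne_zero) (ZMod 3)).toMonoidHom 2
    rwa [RingHom.toMonoidHom_eq_coe, MonoidHom.coe_coe, map_ofNat,
      orderOf_eq_prime (p := 2) (by decide) (by decide)] at h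
  · have h := orderOf_pow_dvd (x := (2 : ZMod (3 ^ (n + 1)))) 2
    rwa [show (2 : ZMod (3 ^ (n + 1))) ^ 2 = 1 + (3 : ℕ) by norm_num,
      orderOf_one_add_prime Nat.prime_three (by decide)] at h

theorem pow_add_mod_periodic_iff {N a c p : ℕ} (ha : IsUnit (a : ZMod N)) :
    (∀ n, a ^ (n + p + c) % N = a ^ (n + c) % N) ↔ (a : ZMod N) ^ p = 1 := by
  simp_rw [← natCast_eq_natCast_iff', Nat.cast_pow, add_right_comm _ p, pow_add _ _ p]
  refine ⟨fun h => ?_, fun h n => by rw [h, mul_one]⟩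
  simpa [(ha.pow c).mul_eq_left] using h 0

end ZMod

theorem stmt_10 (m : ℕ) :
    let y₀ : ℕ → ℕ := fun n => ((3 ^ m + 1) / 2) ^ (n + 3 ^ (m - 1)) % 3 ^ m
    (∀ n : ℕ, y₀ (n + Nat.totient (3 ^ m)) = y₀ n) ∧
    (∀ p : ℕ, 0 < p → (∀ n : ℕ, y₀ (n + p) = y₀ n) → Nat.totient (3 ^ m) ≤ p) := by
  intro y₀
  have hinv := ZMod.natCast_succ_div_two_mul_two (Odd.pow (by decide) : Odd (3 ^ m))
  have hperiod (p : ℕ) : (∀ n, y₀ (n + p) = y₀ n) ↔ φ (3 ^ m) ∣ p := by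
    rw [← ZMod.orderOf_two_three_pow, ← orderOf_eq_orderOf_of_mul_eq_one hinv,
      orderOf_dvd_iff_pow_eq_one]
    exact ZMod.pow_add_mod_periodic_iff (IsUnit.of_mul_eq_one _ hinv)
  exact ⟨(hperiod _).mpr dvd_rfl, fun p hp h => Nat.le_of_dvd hp ((hperiod p).mp h)⟩
end

section
/- For every m ≥ 0 and n ≥ 0, x₀(m, n + φ(3^m)) = 2^(φ(3^m)) · x₀(m,n) − (2^(φ(3^m)) − 1)/3^m, where x₀(m,n) := (1 + 2^n · y₀(m,n))/3^m and y₀(m,n) := ((3^m+1)/2)^(n+3^(m−1)) mod 3^m. -/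
/-!
Write `T = 3 ^ m` and `c = (T + 1) / 2`, the inverse of `2` modulo `T`, so that `y₀ k ≡ c ^ (k + 3 ^ (m - 1))`.
By lifting the exponent, `2 ^ 3 ^ (m - 1) ≡ -1 [MOD T]`; hence `2 ^ k * y₀ k ≡ c ^ 3 ^ (m - 1) ≡ -1`, i.e. the
division defining `x₀ k` is exact. By Euler's theorem `y₀` has period `φ T` and `T ∣ 2 ^ φ T - 1`, and the recurrence
is the identity `1 + 2 ^ (n + φ T) * y = 2 ^ φ T * (1 + 2 ^ n * y) - (2 ^ φ T - 1)` divided by `T`.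
-/

open scoped Nat

theorem pow_dvd_pow_prime_pow_add_one {p x : ℕ} [Fact p.Prime] (hp : Odd p) (hx : p ∣ x + 1)
    (m : ℕ) : p ^ m ∣ x ^ p ^ (m - 1) + 1 := by
  rcases m.eq_zero_or_pos with rfl | hm
  · simp
  have hpx : ¬p ∣ x := fun h ↦ (Fact.out : p.Prime).one_lt.ne' <|
    Nat.eq_one_of_dvd_one <| (Nat.dvd_add_right h).mp hx
  have hv := padicValNat.pow_add_pow (y := 1) hp hx hpx (n := p ^ (m - 1)) hp.pow
  rw [one_pow, padicValNat.prime_pow] at hv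
  have hx1 := one_le_padicValNat_of_dvd x.add_one_ne_zero hx
  exact (pow_dvd_pow p (by omega)).trans pow_padicValNat_dvd

theorem ZMod.two_mul_half_succ {N : ℕ} (hN : Odd N) : (2 : ZMod N) * ((N + 1) / 2 : ℕ) = 1 := by
  rw [← Nat.cast_ofNat, ← Nat.cast_mul, Nat.two_mul_div_two_of_even hN.add_one]
  simp

theorem Nat.coprime_half_succ {N : ℕ} (hN : Odd N) : ((N + 1) / 2).Coprime N :=
  (ZMod.isUnit_iff_coprime _ _).mp (IsUnit.of_mul_eq_one_right _ (ZMod.two_mul_half_succ hN))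

theorem Nat.pow_add_totient_mod {c N : ℕ} (hc : c.Coprime N) (k : ℕ) :
    c ^ (k + φ N) % N = c ^ k % N := by
  simpa [pow_add, Nat.ModEq] using (Nat.ModEq.pow_totient hc).mul_left (c ^ k)

theorem dvd_one_add_two_pow_mul_half_succ_pow_mod {N e : ℕ} (hN : Odd N) (he : N ∣ 2 ^ e + 1)
    (k : ℕ) : N ∣ 1 + 2 ^ k * (((N + 1) / 2) ^ (k + e) % N) := by
  set c : ZMod N := (((N + 1) / 2 : ℕ) : ZMod N)
  have h2c : 2 * c = 1 := ZMod.two_mul_half_succ hN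
  have h2e : (2 : ZMod N) ^ e = -1 := by
    rw [← ZMod.natCast_eq_zero_iff] at he
    push_cast at he
    linear_combination he
  rw [← ZMod.natCast_eq_zero_iff]
  push_cast [ZMod.natCast_mod]
  rw [pow_add, ← mul_assoc, ← mul_pow, h2c, one_pow, one_mul]
  linear_combination c ^ e * h2e - congrArg (· ^ e) h2c

theorem stmt_12 (m n : ℕ) :
    let y₀ : ℕ → ℕ := fun k => ((3 ^ m + 1) / 2) ^ (k + 3 ^ (m - 1)) % 3 ^ m
    let x₀ : ℕ → ℕ := fun k => (1 + 2 ^ k * y₀ k) / 3 ^ m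
    x₀ (n + Nat.totient (3 ^ m)) =
      2 ^ Nat.totient (3 ^ m) * x₀ n - (2 ^ Nat.totient (3 ^ m) - 1) / 3 ^ m := by
  intro y₀ x₀
  have hodd : Odd (3 ^ m) := Odd.pow (by decide)
  have hexact : 3 ^ m ∣ 1 + 2 ^ n * y₀ n :=
    dvd_one_add_two_pow_mul_half_succ_pow_mod hodd
      (pow_dvd_pow_prime_pow_add_one (by decide) (by norm_num) m) n
  have heuler : 3 ^ m ∣ 2 ^ φ (3 ^ m) - 1 :=
    (Nat.modEq_iff_dvd' Nat.one_le_two_pow).mp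
      (Nat.ModEq.pow_totient (Nat.coprime_two_left.mpr hodd)).symm
  have hperiod : y₀ (n + φ (3 ^ m)) = y₀ n := by
    simp only [y₀, add_right_comm n]
    exact Nat.pow_add_totient_mod (Nat.coprime_half_succ hodd) _
  have hsplit : 1 + 2 ^ (n + φ (3 ^ m)) * y₀ (n + φ (3 ^ m)) =
      2 ^ φ (3 ^ m) * (1 + 2 ^ n * y₀ n) - (2 ^ φ (3 ^ m) - 1) := by
    rw [hperiod, pow_add, mul_comm (2 ^ n), mul_assoc, mul_add, mul_one]
    have := Nat.one_le_two_pow (n := φ (3 ^ m))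
    omega
  change (1 + 2 ^ (n + φ (3 ^ m)) * y₀ (n + φ (3 ^ m))) / 3 ^ m = _
  have hfactor : 2 ^ φ (3 ^ m) * (1 + 2 ^ n * y₀ n) = 3 ^ m * (2 ^ φ (3 ^ m) * x₀ n) := by
    rw [mul_left_comm, Nat.mul_div_cancel' hexact]
  rw [hsplit, hfactor, Nat.mul_sub_div_of_dvd (by positivity) heuler]
end

section
/- For every m ≥ 1 and 1 ≤ j ≤ m − 1, the rational number 3^(j−1) · binom(3^(m−1) − 1, j − 1) / j is a positive integer. -/
/-!
Since `j * C(N, j) = N * C(N - 1, j - 1)` with `N = 3^(m-1)`, the part of `j` prime to `3`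
divides `C(N - 1, j - 1)`, while the `3`-part of `j` is `3^a` with `a < j`, so it divides
`3^(j-1)`. Positivity comes from `j ≤ m - 1 < N`.
-/

namespace Nat

variable {p j : ℕ}

theorem ordProj_dvd_pow_pred (p : ℕ) (hj : j ≠ 0) : ordProj[p] j ∣ p ^ (j - 1) :=
  pow_dvd_pow p (by have := factorization_lt p hj; omega)

theorem ordCompl_dvd_choose_prime_pow_pred (hp : p.Prime) (e : ℕ) (hj : j ≠ 0) :
    ordCompl[p] j ∣ (p ^ e - 1).choose (j - 1) := by
  have hcop : Coprime (ordCompl[p] j) (p ^ e) :=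
    ((coprime_ordCompl hp hj).pow_left e).symm
  have hmul : p ^ e * (p ^ e - 1).choose (j - 1) = (p ^ e).choose j * j := by
    have hpos : 0 < p ^ e := pow_pos hp.pos e
    have := add_one_mul_choose_eq (p ^ e - 1) (j - 1)
    rwa [Nat.sub_add_cancel hpos, Nat.sub_add_cancel (pos_of_ne_zero hj)] at this
  refine hcop.dvd_of_dvd_mul_left ?_
  rw [hmul]
  exact (ordCompl_dvd j p).mul_left _

theorem dvd_prime_pow_pred_mul_choose (hp : p.Prime) (e : ℕ) (hj : j ≠ 0) :
    j ∣ p ^ (j - 1) * (p ^ e - 1).choose (j - 1) := by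
  conv_lhs => rw [← ordProj_mul_ordCompl_eq_self j p]
  exact mul_dvd_mul (ordProj_dvd_pow_pred p hj) (ordCompl_dvd_choose_prime_pow_pred hp e hj)

end Nat

theorem stmt_14_general (m j : ℕ) (hj : 1 ≤ j) (hjm : j ≤ m - 1) :
    ∃ k : ℕ, 0 < k ∧
      ((3 ^ (j - 1) * Nat.choose (3 ^ (m - 1) - 1) (j - 1) : ℚ) / (j : ℚ)) = (k : ℚ) := by
  obtain ⟨k, hk⟩ := Nat.dvd_prime_pow_pred_mul_choose Nat.prime_three (m - 1) (j := j) (by omega)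
  have hchoose : 0 < (3 ^ (m - 1) - 1).choose (j - 1) := by
    have := Nat.lt_pow_self (n := m - 1) (by norm_num : 1 < 3)
    exact Nat.choose_pos (by omega)
  have hprod : 0 < 3 ^ (j - 1) * (3 ^ (m - 1) - 1).choose (j - 1) := by positivity
  refine ⟨k, Nat.pos_of_mul_pos_left (hk ▸ hprod), ?_⟩
  rw [div_eq_iff (by positivity)]
  exact_mod_cast hk.trans (mul_comm j k)

theorem stmt_14 (m j : ℕ) (hm : 1 ≤ m) (hj : 1 ≤ j) (hjm : j ≤ m - 1) :
    ∃ k : ℕ, 0 < k ∧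
      ((3 ^ (j - 1) * Nat.choose (3 ^ (m - 1) - 1) (j - 1) : ℚ) / (j : ℚ)) = (k : ℚ) :=
  stmt_14_general m j hj hjm
end
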